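/- arXiv:1810.02878 — 3 statements merged into one kernel-verified Lean document; each statement's English description precedes it below -/
import Mathlib

section
/- The 4-dimensional Lebesgue volume of the ball B′(0,r) = {x ∈ ℝ⁴ : max{√(x₀²+x₁²), √(x₀²+x₂²), √(x₀²+x₃²)} < r} equals 16·∫₀^r (r²−t²)^{3/2} dt, which equals (6/π) times the volume of the Euclidean 4-ball of radius r. -/
/-!
Slicing at `x₀ = t`, the ball `B′(0, r)` is the open cube `(-√(r² - t²), √(r² - t²))³` in the
remaining coordinates, so by Fubini its volume is `∫_{-r}^{r} 8 (r² - t²)^{3/2} dt`, which is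
`16 ∫_0^r (r² - t²)^{3/2} dt` by evenness. The substitution `t = r sin θ` turns this into
`16 r⁴ ∫_0^{π/2} cos⁴ θ dθ = 3 π r⁴`, while the Euclidean 4-ball has volume `π² r⁴ / 2`.
-/

open MeasureTheory Real Set

/-- When `r ^ 2 < a ^ 2` both sides are false, the right one because `√` vanishes on negatives. -/
theorem Real.sqrt_sq_add_sq_lt_iff {a b r : ℝ} (hr : 0 ≤ r) :
    √(a ^ 2 + b ^ 2) < r ↔ |b| < √(r ^ 2 - a ^ 2) := by
  rw [sqrt_lt (by positivity) hr, lt_sqrt (abs_nonneg b), sq_abs]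
  constructor <;> intro h <;> linarith

theorem measurableSet_setOf_forall_abs_lt {α ι : Type*} [MeasurableSpace α] [Countable ι]
    {g : α → ℝ} (hg : Measurable g) :
    MeasurableSet {p : α × (ι → ℝ) | ∀ i, |p.2 i| < g p.1} :=
  measurableSet_setOfPred.2 (by fun_prop)

theorem MeasureTheory.Measure.prod_volume_setOf_forall_abs_lt {α ι : Type*} [MeasurableSpace α]
    [Fintype ι] (μ : Measure α) {g : α → ℝ} (hg : Measurable g) :
    μ.prod volume {p : α × (ι → ℝ) | ∀ i, |p.2 i| < g p.1} =
      ∫⁻ a, ENNReal.ofReal (2 * g a) ^ Fintype.card ι ∂μ := by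
  rw [Measure.prod_apply (measurableSet_setOf_forall_abs_lt hg)]
  refine lintegral_congr fun a => ?_
  have hslice : Prod.mk a ⁻¹' {p : α × (ι → ℝ) | ∀ i, |p.2 i| < g p.1} =
      univ.pi fun _ => Ioo (-g a) (g a) := by
    ext x; simp [abs_lt]
  rw [hslice, volume_pi_pi, Real.volume_Ioo, Finset.prod_const, Finset.card_univ, sub_neg_eq_add,
    two_mul]

theorem EuclideanSpace.measurePreserving_head_tail (n : ℕ) :
    MeasurePreserving (fun x : EuclideanSpace ℝ (Fin (n + 1)) => (x 0, fun i : Fin n => x i.succ))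
      volume volume :=
  (measurePreserving_piFinSuccAbove (fun _ : Fin (n + 1) => (volume : Measure ℝ)) 0).comp
    (EuclideanSpace.volume_preserving_symm_measurableEquiv_toLp (Fin (n + 1)))

theorem intervalIntegral.integral_neg_self_eq_two_mul_of_even {f : ℝ → ℝ} (heven : ∀ x, f (-x) = f x)
    {a : ℝ} (hf : IntervalIntegrable f volume 0 a) :
    ∫ x in -a..a, f x = 2 * ∫ x in 0..a, f x := by
  have hneg : ∫ x in -a..0, f x = ∫ x in 0..a, f x := by
    simpa [heven] using (intervalIntegral.integral_comp_neg (a := 0) (b := a) f).symm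
  have hf' : IntervalIntegrable f volume (-a) 0 := by
    simpa [heven] using ((IntervalIntegrable.iff_comp_neg (f := f)).mp hf).symm
  rw [← intervalIntegral.integral_add_adjacent_intervals hf' hf, hneg, two_mul]

theorem integral_sqrt_sq_sub_sq_pow (n : ℕ) {r : ℝ} (hr : 0 ≤ r) :
    ∫ t in 0..r, √(r ^ 2 - t ^ 2) ^ n = r ^ (n + 1) * ∫ θ in 0..π / 2, cos θ ^ (n + 1) := by
  have hcos : ∀ θ ∈ uIcc 0 (π / 2), √(r ^ 2 - (r * sin θ) ^ 2) = r * cos θ := fun θ hθ => by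
    rw [uIcc_of_le (by positivity)] at hθ
    have hc : 0 ≤ cos θ := cos_nonneg_of_mem_Icc ⟨by linarith [hθ.1, pi_pos], hθ.2⟩
    rw [show r ^ 2 - (r * sin θ) ^ 2 = (r * cos θ) ^ 2 by
        linear_combination -r ^ 2 * sin_sq_add_cos_sq θ, sqrt_sq (mul_nonneg hr hc)]
  calc ∫ t in 0..r, √(r ^ 2 - t ^ 2) ^ n
      = ∫ t in r * sin 0..r * sin (π / 2), √(r ^ 2 - t ^ 2) ^ n := by simp
    _ = ∫ θ in 0..π / 2, √(r ^ 2 - (r * sin θ) ^ 2) ^ n * (r * cos θ) :=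
        (intervalIntegral.integral_comp_mul_deriv (fun θ _ => (hasDerivAt_sin θ).const_mul r)
          (by fun_prop) (by fun_prop)).symm
    _ = ∫ θ in 0..π / 2, r ^ (n + 1) * cos θ ^ (n + 1) :=
        intervalIntegral.integral_congr fun θ hθ => by
          simp only [hcos θ hθ]; ring
    _ = r ^ (n + 1) * ∫ θ in 0..π / 2, cos θ ^ (n + 1) := intervalIntegral.integral_const_mul _ _

theorem integral_cos_pow_four_pi_div_two : ∫ θ in 0..π / 2, cos θ ^ 4 = 3 * π / 16 := by
  rw [integral_cos_pow, integral_cos_sq]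
  norm_num
  ring

theorem lintegral_ofReal_two_mul_sqrt_sq_sub_sq_pow {n : ℕ} (hn : n ≠ 0) {r : ℝ} (hr : 0 ≤ r) :
    ∫⁻ t, ENNReal.ofReal (2 * √(r ^ 2 - t ^ 2)) ^ n =
      ENNReal.ofReal (2 ^ (n + 1) * ∫ t in 0..r, √(r ^ 2 - t ^ 2) ^ n) := by
  set f : ℝ → ℝ := fun t => (2 * √(r ^ 2 - t ^ 2)) ^ n with hf
  have hcont : Continuous f := by fun_prop
  -- `√` vanishes on negatives, so `f` is supported in `[-r, r]`
  have hsupp : Function.support f ⊆ Ioc (-r) r := by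
    intro t ht
    by_contra hout
    have : r ^ 2 - t ^ 2 ≤ 0 := by
      rw [mem_Ioc, not_and_or, not_lt, not_le] at hout
      rcases hout with h | h <;> nlinarith
    exact ht (by simp [hf, sqrt_eq_zero'.2 this, hn])
  have hint : Integrable f :=
    hcont.integrable_of_hasCompactSupport
      (HasCompactSupport.of_support_subset_isCompact isCompact_Icc
        (hsupp.trans Ioc_subset_Icc_self))
  calc ∫⁻ t, ENNReal.ofReal (2 * √(r ^ 2 - t ^ 2)) ^ n
      = ∫⁻ t, ENNReal.ofReal (f t) := by
        simp only [hf, ENNReal.ofReal_pow (mul_nonneg zero_le_two (sqrt_nonneg _))]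
    _ = ENNReal.ofReal (∫ t in -r..r, f t) := by
        rw [intervalIntegral.integral_eq_integral_of_support_subset hsupp,
          ofReal_integral_eq_lintegral_ofReal hint (ae_of_all _ fun t => by positivity)]
    _ = ENNReal.ofReal (2 ^ (n + 1) * ∫ t in 0..r, √(r ^ 2 - t ^ 2) ^ n) := by
        rw [intervalIntegral.integral_neg_self_eq_two_mul_of_even (fun t => by simp [hf])
          (hcont.intervalIntegrable _ _)]
        simp only [hf, mul_pow, intervalIntegral.integral_const_mul, pow_succ]
        ring_nf

theorem volume_setOf_max_sqrt_sq_add_sq_lt {r : ℝ} (hr : 0 ≤ r) :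
    volume {x : EuclideanSpace ℝ (Fin 4) |
        max (max (√(x 0 ^ 2 + x 1 ^ 2)) (√(x 0 ^ 2 + x 2 ^ 2))) (√(x 0 ^ 2 + x 3 ^ 2)) < r} =
      ENNReal.ofReal (16 * ∫ t in 0..r, √(r ^ 2 - t ^ 2) ^ 3) := by
  have hcube : {x : EuclideanSpace ℝ (Fin 4) |
        max (max (√(x 0 ^ 2 + x 1 ^ 2)) (√(x 0 ^ 2 + x 2 ^ 2))) (√(x 0 ^ 2 + x 3 ^ 2)) < r} =
      (fun x : EuclideanSpace ℝ (Fin 4) => (x 0, fun i : Fin 3 => x i.succ)) ⁻¹'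
        {p | ∀ i, |p.2 i| < √(r ^ 2 - p.1 ^ 2)} := by
    ext x
    simp [Fin.forall_fin_succ, sqrt_sq_add_sq_lt_iff hr, and_assoc]
  have hg : Measurable fun t : ℝ => √(r ^ 2 - t ^ 2) := by fun_prop
  rw [hcube, (EuclideanSpace.measurePreserving_head_tail 3).measure_preimage
    (measurableSet_setOf_forall_abs_lt hg).nullMeasurableSet, Measure.volume_eq_prod,
    Measure.prod_volume_setOf_forall_abs_lt volume hg, Fintype.card_fin,
    lintegral_ofReal_two_mul_sqrt_sq_sub_sq_pow three_ne_zero hr]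
  norm_num

/-- The 4-dimensional Lebesgue volume of B′(0,r) equals 16·∫₀^r (r²−t²)^{3/2} dt,
which is (6/π) times the volume of the Euclidean 4-ball of radius r. -/
theorem volume_qn'_ball (r : ℝ) (hr : 0 < r) :
    volume {x : EuclideanSpace ℝ (Fin 4) |
        max (max (Real.sqrt (x 0 ^ 2 + x 1 ^ 2)) (Real.sqrt (x 0 ^ 2 + x 2 ^ 2)))
          (Real.sqrt (x 0 ^ 2 + x 3 ^ 2)) < r} =
      ENNReal.ofReal (16 * ∫ t in (0 : ℝ)..r, (r ^ 2 - t ^ 2) ^ ((3 : ℝ) / 2)) ∧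
    volume {x : EuclideanSpace ℝ (Fin 4) |
        max (max (Real.sqrt (x 0 ^ 2 + x 1 ^ 2)) (Real.sqrt (x 0 ^ 2 + x 2 ^ 2)))
          (Real.sqrt (x 0 ^ 2 + x 3 ^ 2)) < r} =
      ENNReal.ofReal (6 / π) * volume (Metric.ball (0 : EuclideanSpace ℝ (Fin 4)) r) := by
  have hrpow : ∫ t in (0 : ℝ)..r, (r ^ 2 - t ^ 2) ^ ((3 : ℝ) / 2) =
      ∫ t in (0 : ℝ)..r, √(r ^ 2 - t ^ 2) ^ 3 := by
    refine intervalIntegral.integral_congr fun t ht => ?_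
    rw [uIcc_of_le hr.le] at ht
    have : 0 ≤ r ^ 2 - t ^ 2 := by nlinarith [ht.1, ht.2]
    simp only [rpow_div_two_eq_sqrt _ this]
    norm_cast
  refine ⟨by rw [volume_setOf_max_sqrt_sq_add_sq_lt hr.le, hrpow], ?_⟩
  rw [volume_setOf_max_sqrt_sq_add_sq_lt hr.le, integral_sqrt_sq_sub_sq_pow 3 hr.le,
    integral_cos_pow_four_pi_div_two,
    InnerProductSpace.volume_ball_of_dim_even (k := 2) (by simp), finrank_euclideanSpace_fin,
    ← ENNReal.ofReal_pow hr.le, ← ENNReal.ofReal_mul (by positivity),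
    ← ENNReal.ofReal_mul (by positivity)]
  congr 1
  norm_num [Nat.factorial]
  field_simp
  ring
end

section
/- The series Σₙ Σ_{|ν|=n} n!·P_ν(x), evaluated at q = (1/3)(i+j+k), has Euclidean norm ‖q‖ = 1/√3 < 1, yet the series diverges at q: each homogeneous degree-n term evaluates to a sum with total absolute value Σ_{|ν|=n} (n!/(n₁!n₂!n₃!))·(1/3)ⁿ = 1, so the partial sums do not converge. -/
/-! At `q = (i + j + k)/3` every Fueter variable equals `1/3`, so every word product is `3⁻ⁿ`
and `n! P_ν(q) = |A_ν| 3⁻ⁿ`. The sets `A_ν` with `|ν| = n` partition the `3ⁿ` words of length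
`n`, so the degree-`n` block of the series is `1`, both in value and in total absolute value,
and the `N`-th partial sum is `N`. -/

open Quaternion Filter
open scoped Classical

noncomputable def qn' (x : ℍ[ℝ]) : ℝ :=
  max (max (Real.sqrt (x.re ^ 2 + x.imI ^ 2)) (Real.sqrt (x.re ^ 2 + x.imJ ^ 2)))
    (Real.sqrt (x.re ^ 2 + x.imK ^ 2))

/-- Fueter variables ζ₁(x)=x₁−ix₀, ζ₂(x)=x₂−jx₀, ζ₃(x)=x₃−kx₀. -/
noncomputable def zeta : Fin 3 → ℍ[ℝ] → ℍ[ℝ]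
  | 0, x => ⟨x.imI, -x.re, 0, 0⟩
  | 1, x => ⟨x.imJ, 0, -x.re, 0⟩
  | 2, x => ⟨x.imK, 0, 0, -x.re⟩

/-- The set A_ν of words of length n with ν t letters t. -/
noncomputable def words (n : ℕ) (ν : Fin 3 → ℕ) : Finset (Fin n → Fin 3) :=
  Finset.univ.filter fun w => ∀ t : Fin 3, (Finset.univ.filter fun s => w s = t).card = ν t

/-- The ordered product ζ_{i₁}(x)⋯ζ_{iₙ}(x) along a word. -/
noncomputable def wprod {n : ℕ} (w : Fin n → Fin 3) (x : ℍ[ℝ]) : ℍ[ℝ] :=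
  ((List.ofFn w).map fun t => zeta t x).prod

/-- The symmetric homogeneous hyperholomorphic polynomial P_ν. -/
noncomputable def Pnu (n : ℕ) (ν : Fin 3 → ℕ) (x : ℍ[ℝ]) : ℍ[ℝ] :=
  ((n.factorial : ℝ)⁻¹) • ∑ w ∈ words n ν, wprod w x

/-- Partial sums of the Taylor series Σₙ Σ_{|ν|=n} P_ν(x)·a_ν. -/
noncomputable def taylorPartial (a : (Fin 3 → ℕ) → ℍ[ℝ]) (N : ℕ) (x : ℍ[ℝ]) : ℍ[ℝ] :=
  ∑ n ∈ Finset.range N, ∑ ν ∈ Finset.Nat.antidiagonalTuple 3 n, Pnu n ν x * a ν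
/-- The point q = (i+j+k)/3. -/
noncomputable def qpt : ℍ[ℝ] := ⟨0, 3⁻¹, 3⁻¹, 3⁻¹⟩

lemma zeta_qpt (t : Fin 3) : zeta t qpt = ((3⁻¹ : ℝ) : ℍ[ℝ]) := by
  fin_cases t <;> ext <;> simp [zeta, qpt, -Quaternion.coe_inv]

lemma norm_qpt : ‖qpt‖ = 1 / Real.sqrt 3 := by
  rw [norm_eq_sqrt_real_inner, Quaternion.inner_self, Quaternion.normSq_def']
  norm_num [qpt]

lemma wprod_of_forall_zeta_eq {x a : ℍ[ℝ]} (hx : ∀ t, zeta t x = a) {n : ℕ}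
    (w : Fin n → Fin 3) : wprod w x = a ^ n := by
  rw [wprod, List.map_congr_left (fun t _ => hx t), List.map_const', List.length_ofFn,
    List.prod_replicate]

lemma sum_card_words (n : ℕ) :
    ∑ ν ∈ Finset.Nat.antidiagonalTuple 3 n, (words n ν).card = 3 ^ n := by
  have hcount : ((Finset.univ : Finset (Fin n → Fin 3)) : Set _).MapsTo
      (fun (w : Fin n → Fin 3) (t : Fin 3) => (Finset.univ.filter fun s => w s = t).card)
      (Finset.Nat.antidiagonalTuple 3 n) := fun w _ => by
    simpa [Finset.Nat.mem_antidiagonalTuple] using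
      (Finset.card_eq_sum_card_fiberwise (f := w) (t := Finset.univ)
        (s := Finset.univ) fun _ _ => Finset.mem_coe.2 (Finset.mem_univ _)).symm
  calc ∑ ν ∈ Finset.Nat.antidiagonalTuple 3 n, (words n ν).card
      = (Finset.univ : Finset (Fin n → Fin 3)).card := by
        rw [Finset.card_eq_sum_card_fiberwise hcount]
        exact Finset.sum_congr rfl fun ν _ => by simp [words, funext_iff]
    _ = 3 ^ n := by simp

lemma factorial_smul_Pnu_of_forall_zeta_eq {x a : ℍ[ℝ]} (hx : ∀ t, zeta t x = a)
    (n : ℕ) (ν : Fin 3 → ℕ) :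
    (n.factorial : ℝ) • Pnu n ν x = ((words n ν).card : ℝ) • a ^ n := by
  rw [Pnu, smul_inv_smul₀ (by exact_mod_cast n.factorial_ne_zero),
    Finset.sum_congr rfl fun w _ => wprod_of_forall_zeta_eq hx w, Finset.sum_const,
    Nat.cast_smul_eq_nsmul]

lemma sum_factorial_smul_Pnu_of_forall_zeta_eq {x a : ℍ[ℝ]} (hx : ∀ t, zeta t x = a)
    (n : ℕ) :
    ∑ ν ∈ Finset.Nat.antidiagonalTuple 3 n, (n.factorial : ℝ) • Pnu n ν x
      = (3 ^ n : ℝ) • a ^ n := by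
  simp_rw [factorial_smul_Pnu_of_forall_zeta_eq hx, ← Finset.sum_smul, ← Nat.cast_sum,
    sum_card_words, Nat.cast_pow, Nat.cast_ofNat]

lemma sum_norm_factorial_smul_Pnu_of_forall_zeta_eq {x a : ℍ[ℝ]} (hx : ∀ t, zeta t x = a)
    (n : ℕ) :
    ∑ ν ∈ Finset.Nat.antidiagonalTuple 3 n, ‖(n.factorial : ℝ) • Pnu n ν x‖
      = (3 * ‖a‖) ^ n := by
  simp_rw [factorial_smul_Pnu_of_forall_zeta_eq hx, norm_smul, norm_pow, Real.norm_natCast,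
    ← Finset.sum_mul, ← Nat.cast_sum, sum_card_words, Nat.cast_pow, Nat.cast_ofNat, mul_pow]

lemma Quaternion.not_tendsto_natCast (L : ℍ[ℝ]) :
    ¬ Tendsto (fun N : ℕ => (N : ℍ[ℝ])) atTop (nhds L) := fun h =>
  not_tendsto_nhds_of_tendsto_atTop tendsto_natCast_atTop_atTop ‖L‖ <| by
    simpa [← Quaternion.coe_natCast, Quaternion.norm_coe] using h.norm

/-- At q = (i+j+k)/3 we have ‖q‖ = 1/√3 < 1, each homogeneous degree-n block of the
series Σₙ Σ_{|ν|=n} n!·P_ν has total absolute value 1, and the series diverges at q. -/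
theorem series_diverges_inside_euclidean_ball :
    ‖qpt‖ = 1 / Real.sqrt 3 ∧ 1 / Real.sqrt 3 < 1 ∧
    (∀ n : ℕ, ∑ ν ∈ Finset.Nat.antidiagonalTuple 3 n,
        ‖(n.factorial : ℝ) • Pnu n ν qpt‖ = 1) ∧
    ¬ ∃ L : ℍ[ℝ], Filter.Tendsto (fun N => ∑ n ∈ Finset.range N,
        ∑ ν ∈ Finset.Nat.antidiagonalTuple 3 n,
          (n.factorial : ℝ) • Pnu n ν qpt) atTop (nhds L) := by
  have hblock (n : ℕ) :
      ∑ ν ∈ Finset.Nat.antidiagonalTuple 3 n, (n.factorial : ℝ) • Pnu n ν qpt = 1 := by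
    rw [sum_factorial_smul_Pnu_of_forall_zeta_eq zeta_qpt, ← Quaternion.coe_pow,
      Quaternion.smul_coe, ← mul_pow]
    norm_num
  refine ⟨norm_qpt, ?_, fun n => ?_, fun ⟨L, hL⟩ => Quaternion.not_tendsto_natCast L ?_⟩
  · rw [div_lt_one (by positivity), Real.lt_sqrt zero_le_one]
    norm_num
  · rw [sum_norm_factorial_smul_Pnu_of_forall_zeta_eq zeta_qpt, Quaternion.norm_coe]
    norm_num
  · simpa [hblock] using hL
end

section
/- (Octonion Abel Theorem) Suppose there exist constants r₀ > 0, M ∈ ℝ, N₀ ∈ ℕ such that ‖c_ν‖·r₀ⁿ ≤ M for all n > N₀ and multi-indices ν = (n₁,…,n₇) with Σnᵢ = n. Then the series h(x) = Σₙ Σ_{|ν|=n} V_ν(x) c_ν converges compactly on {x ∈ 𝕆 : ‖x‖′_O < r₀}. -/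
open Quaternion Filter
open scoped Classical

/-- The octonions 𝕆, realized via the Cayley–Dickson construction on ℍ. -/
abbrev Octonion : Type := ℍ[ℝ] × ℍ[ℝ]

/-- Cayley–Dickson multiplication: (a,b)·(c,d) = (ac − d̄b, da + bc̄). -/
noncomputable def omul (x y : Octonion) : Octonion :=
  (x.1 * y.1 - star y.2 * x.2, y.2 * x.1 + x.2 * star y.1)

noncomputable def oOne : Octonion := (1, 0)

/-- Real coordinates x₀,…,x₇ of an octonion in the standard basis e₀,…,e₇. -/
noncomputable def ocoord (x : Octonion) : Fin 8 → ℝ :=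
  ![x.1.re, x.1.imI, x.1.imJ, x.1.imK, x.2.re, x.2.imI, x.2.imJ, x.2.imK]

/-- The standard basis e₀,…,e₇ of the octonions. -/
noncomputable def obasis : Fin 8 → Octonion :=
  ![(1, 0), (⟨0, 1, 0, 0⟩, 0), (⟨0, 0, 1, 0⟩, 0), (⟨0, 0, 0, 1⟩, 0),
    (0, 1), (0, ⟨0, 1, 0, 0⟩), (0, ⟨0, 0, 1, 0⟩), (0, ⟨0, 0, 0, 1⟩)]

/-- Octonionic Fueter variables ζᵢ(x) = xᵢ − eᵢ·x₀, i = 1,…,7. -/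
noncomputable def ozeta (t : Fin 7) (x : Octonion) : Octonion :=
  ocoord x t.succ • oOne - ocoord x 0 • obasis t.succ

/-- Words of length n with ν t letters t (t = 1,…,7). -/
noncomputable def owords (n : ℕ) (ν : Fin 7 → ℕ) : Finset (Fin n → Fin 7) :=
  Finset.univ.filter fun w => ∀ t : Fin 7, (Finset.univ.filter fun s => w s = t).card = ν t

/-- The left-nested product ((…((ζ_{i₁}ζ_{i₂})ζ_{i₃})…)ζ_{iₙ}) along a word. -/
noncomputable def owprod {n : ℕ} (w : Fin n → Fin 7) (x : Octonion) : Octonion :=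
  ((List.ofFn w).map fun t => ozeta t x).foldl omul oOne

/-- The homogeneous O-analytic polynomial V_ν. -/
noncomputable def Vnu (n : ℕ) (ν : Fin 7 → ℕ) (x : Octonion) : Octonion :=
  ((n.factorial : ℝ)⁻¹) • ∑ w ∈ owords n ν, owprod w x

/-- The octonionic auxiliary norm ‖x‖′_O = max_{1≤i≤7} √(x₀² + xᵢ²). -/
noncomputable def onorm' (x : Octonion) : ℝ :=
  Finset.univ.sup' ⟨0, Finset.mem_univ 0⟩
    fun i : Fin 7 => Real.sqrt (ocoord x 0 ^ 2 + ocoord x i.succ ^ 2)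

/-- The (multiplicative) Euclidean norm on the octonions. -/
noncomputable def onorm (x : Octonion) : ℝ :=
  Real.sqrt (Quaternion.normSq x.1 + Quaternion.normSq x.2)

/-- Partial sums of the octonionic Taylor series Σₙ Σ_{|ν|=n} V_ν(x)·c_ν. -/
noncomputable def otaylorPartial (c : (Fin 7 → ℕ) → Octonion) (N : ℕ) (x : Octonion) :
    Octonion :=
  ∑ n ∈ Finset.range N, ∑ ν ∈ Finset.Nat.antidiagonalTuple 7 n, omul (Vnu n ν x) (c ν)

/-!
Although octonion multiplication is not associative, the Euclidean norm is multiplicative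
(Degen's eight-square identity), so every left-nested product of n Fueter variables has norm at
most ‖x‖′ⁿ, since ‖ζᵢ(x)‖ = √(x₀² + xᵢ²). Hence ‖V_ν(x)‖ ≤ #words(ν) ‖x‖′ⁿ / n!, and as the words
of length n over 7 letters number 7ⁿ in total, the n-th homogeneous part of the series is bounded
on {‖x‖′ ≤ r} by M (7r/r₀)ⁿ / n! for n > N₀. The Weierstrass M-test with this exponential series
gives uniform convergence on compact sets.
-/

open Finset Nat

lemma onorm_nonneg (x : Octonion) : 0 ≤ onorm x := Real.sqrt_nonneg _

lemma onorm_eq_sqrt_sum_ocoord_sq (x : Octonion) : onorm x = √(∑ j, ocoord x j ^ 2) := by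
  rw [onorm, normSq_def', normSq_def', Fin.sum_univ_eight]
  congr 1
  simp only [ocoord, Matrix.cons_val]
  ring

lemma onorm_eq_norm_toLp (x : Octonion) : onorm x = ‖WithLp.toLp 2 x‖ := by
  simp [onorm, WithLp.prod_norm_eq_of_L2, normSq_eq_norm_mul_self, sq]

lemma norm_le_onorm (x : Octonion) : ‖x‖ ≤ onorm x := by
  rw [onorm_eq_norm_toLp, Prod.norm_def]
  exact max_le (WithLp.norm_fst_le _ (WithLp.toLp 2 x)) (WithLp.norm_snd_le _ (WithLp.toLp 2 x))

lemma onorm_smul (a : ℝ) (x : Octonion) : onorm (a • x) = |a| * onorm x := by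
  rw [onorm_eq_norm_toLp, onorm_eq_norm_toLp, WithLp.toLp_smul, norm_smul, Real.norm_eq_abs]

lemma onorm_sum_le {ι : Type*} (s : Finset ι) (f : ι → Octonion) :
    onorm (∑ i ∈ s, f i) ≤ ∑ i ∈ s, onorm (f i) := by
  simp only [onorm_eq_norm_toLp, WithLp.toLp_sum]
  exact norm_sum_le _ _

lemma onorm_omul (x y : Octonion) : onorm (omul x y) = onorm x * onorm y := by
  have eight_squares : normSq (omul x y).1 + normSq (omul x y).2 =
      (normSq x.1 + normSq x.2) * (normSq y.1 + normSq y.2) := by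
    simp only [omul, normSq_def', re_mul, imI_mul, imJ_mul, imK_mul, re_sub, imI_sub, imJ_sub,
      imK_sub, re_add, imI_add, imJ_add, imK_add, re_star, imI_star, imJ_star, imK_star]
    ring
  rw [onorm, eight_squares, Real.sqrt_mul (add_nonneg normSq_nonneg normSq_nonneg), onorm, onorm]

lemma onorm_foldl_omul (l : List Octonion) (a : Octonion) :
    onorm (l.foldl omul a) = onorm a * (l.map onorm).prod := by
  induction l generalizing a with
  | nil => simp
  | cons y l ih => rw [List.foldl_cons, ih, onorm_omul, List.map_cons, List.prod_cons, mul_assoc]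

lemma onorm_oOne : onorm oOne = 1 := by simp [onorm, oOne]

lemma ocoord_obasis (i j : Fin 8) : ocoord (obasis i) j = if i = j then 1 else 0 := by
  fin_cases i <;> fin_cases j <;> rfl

lemma ocoord_smul_sub_smul (a b : ℝ) (x y : Octonion) (j : Fin 8) :
    ocoord (a • x - b • y) j = a * ocoord x j - b * ocoord y j := by
  fin_cases j <;> simp [ocoord]

lemma onorm_ozeta (t : Fin 7) (x : Octonion) :
    onorm (ozeta t x) = √(ocoord x 0 ^ 2 + ocoord x t.succ ^ 2) := by
  have hsq : ∀ j, ocoord (ozeta t x) j ^ 2 =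
      (if 0 = j then ocoord x t.succ ^ 2 else 0) + (if t.succ = j then ocoord x 0 ^ 2 else 0) := by
    intro j
    rw [ozeta, ocoord_smul_sub_smul, show oOne = obasis 0 from rfl, ocoord_obasis, ocoord_obasis]
    by_cases h0 : 0 = j <;> by_cases hs : t.succ = j <;> simp [h0, hs]
    exact absurd (hs.trans h0.symm) (Fin.succ_ne_zero t)
  rw [onorm_eq_sqrt_sum_ocoord_sq]
  simp only [hsq, sum_add_distrib, sum_ite_eq, mem_univ, if_true, add_comm]

lemma onorm_ozeta_le_onorm' (t : Fin 7) (x : Octonion) : onorm (ozeta t x) ≤ onorm' x := by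
  rw [onorm_ozeta]
  exact le_sup' (fun i : Fin 7 => √(ocoord x 0 ^ 2 + ocoord x i.succ ^ 2)) (mem_univ t)

lemma onorm'_nonneg (x : Octonion) : 0 ≤ onorm' x :=
  (onorm_nonneg _).trans (onorm_ozeta_le_onorm' 0 x)

lemma continuous_ocoord (j : Fin 8) : Continuous fun x => ocoord x j := by
  fin_cases j
  exacts [continuous_re.comp continuous_fst, continuous_imI.comp continuous_fst,
    continuous_imJ.comp continuous_fst, continuous_imK.comp continuous_fst,
    continuous_re.comp continuous_snd, continuous_imI.comp continuous_snd,
    continuous_imJ.comp continuous_snd, continuous_imK.comp continuous_snd]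

lemma continuous_onorm' : Continuous onorm' := by
  unfold onorm'
  exact Continuous.finset_sup'_apply _ fun i _ =>
    (((continuous_ocoord 0).pow 2).add ((continuous_ocoord i.succ).pow 2)).sqrt

lemma onorm_owprod_le {n : ℕ} (w : Fin n → Fin 7) (x : Octonion) :
    onorm (owprod w x) ≤ onorm' x ^ n := by
  rw [owprod, onorm_foldl_omul, onorm_oOne, one_mul, List.map_map, List.map_ofFn, List.prod_ofFn]
  calc ∏ s, (onorm ∘ fun t => ozeta t x) (w s) ≤ ∏ _s : Fin n, onorm' x :=
        prod_le_prod (fun _ _ => onorm_nonneg _) fun s _ => onorm_ozeta_le_onorm' (w s) x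
    _ = onorm' x ^ n := by simp

lemma onorm_Vnu_le {n : ℕ} {ν : Fin 7 → ℕ} {x : Octonion} {r : ℝ} (hx : onorm' x ≤ r) :
    onorm (Vnu n ν x) ≤ #(owords n ν) * r ^ n / n ! := by
  rw [Vnu, onorm_smul, abs_of_nonneg (by positivity), inv_mul_eq_div]
  gcongr
  calc onorm (∑ w ∈ owords n ν, owprod w x) ≤ ∑ w ∈ owords n ν, onorm (owprod w x) :=
        onorm_sum_le _ _
    _ ≤ ∑ _w ∈ owords n ν, r ^ n :=
        sum_le_sum fun w _ => (onorm_owprod_le w x).trans (pow_le_pow_left₀ (onorm'_nonneg x) hx n)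
    _ = #(owords n ν) * r ^ n := by rw [sum_const, nsmul_eq_mul]

lemma letterCount_mem_antidiagonalTuple {n : ℕ} (w : Fin n → Fin 7) :
    (fun t => #{s | w s = t}) ∈ Nat.antidiagonalTuple 7 n := by
  rw [Nat.mem_antidiagonalTuple]
  simpa using (card_eq_sum_card_fiberwise (f := w) (s := univ) (t := univ)
    fun _ _ => mem_univ _).symm

lemma sum_card_owords (n : ℕ) : ∑ ν ∈ Nat.antidiagonalTuple 7 n, #(owords n ν) = 7 ^ n := by
  have fibres := card_eq_sum_card_fiberwise (s := (univ : Finset (Fin n → Fin 7)))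
    fun w _ => letterCount_mem_antidiagonalTuple w
  rw [Finset.card_univ, Fintype.card_fun, Fintype.card_fin, Fintype.card_fin] at fibres
  rw [fibres]
  exact sum_congr rfl fun ν _ => by simp [owords, funext_iff]

lemma onorm_sum_Vnu_omul_le {c : (Fin 7 → ℕ) → Octonion} {ρ B r : ℝ} {n : ℕ} {x : Octonion}
    (hρ : 0 < ρ) (hc : ∀ ν ∈ Nat.antidiagonalTuple 7 n, onorm (c ν) * ρ ^ n ≤ B)
    (hx : onorm' x ≤ r) :
    onorm (∑ ν ∈ Nat.antidiagonalTuple 7 n, omul (Vnu n ν x) (c ν)) ≤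
      B * ((7 * r / ρ) ^ n / n !) := by
  have hr : 0 ≤ r := (onorm'_nonneg x).trans hx
  calc onorm (∑ ν ∈ Nat.antidiagonalTuple 7 n, omul (Vnu n ν x) (c ν))
      ≤ ∑ ν ∈ Nat.antidiagonalTuple 7 n, onorm (Vnu n ν x) * onorm (c ν) := by
        simpa only [onorm_omul] using onorm_sum_le (Nat.antidiagonalTuple 7 n) fun ν =>
          omul (Vnu n ν x) (c ν)
    _ ≤ ∑ ν ∈ Nat.antidiagonalTuple 7 n, #(owords n ν) * r ^ n / n ! * (B / ρ ^ n) :=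
        sum_le_sum fun ν hν => mul_le_mul (onorm_Vnu_le hx)
          ((le_div_iff₀ (by positivity)).2 (hc ν hν)) (onorm_nonneg _) (by positivity)
    _ = B * ((7 * r / ρ) ^ n / n !) := by
        rw [← sum_mul, ← sum_div, ← sum_mul, ← Nat.cast_sum, sum_card_owords, div_pow]
        push_cast
        ring

/-- Octonion Abel theorem: if ‖c_ν‖·r₀ⁿ ≤ M for all n > N₀ and |ν| = n, then the series
Σₙ Σ_{|ν|=n} V_ν(x)·c_ν converges uniformly on compact subsets of {x : ‖x‖′_O < r₀}. -/
theorem octonion_abel (c : (Fin 7 → ℕ) → Octonion) (r₀ M : ℝ) (N₀ : ℕ) (hr₀ : 0 < r₀)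
    (hbound : ∀ n : ℕ, n > N₀ → ∀ ν ∈ Finset.Nat.antidiagonalTuple 7 n, onorm (c ν) * r₀ ^ n ≤ M) :
    ∃ f : Octonion → Octonion, ∀ K : Set Octonion, K ⊆ {x | onorm' x < r₀} → IsCompact K →
      TendstoUniformlyOn (otaylorPartial c) f atTop K := by
  refine ⟨fun x => ∑' n, ∑ ν ∈ Nat.antidiagonalTuple 7 n, omul (Vnu n ν x) (c ν),
    fun K _ hK => ?_⟩
  obtain ⟨r, hr⟩ := hK.bddAbove_image continuous_onorm'.continuousOn
  rw [mem_upperBounds, Set.forall_mem_image] at hr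
  refine tendstoUniformlyOn_tsum_nat_eventually
    ((Real.summable_pow_div_factorial (7 * r / r₀)).mul_left M) ?_
  filter_upwards [eventually_gt_atTop N₀] with n hn x hx
  exact (norm_le_onorm _).trans (onorm_sum_Vnu_omul_le hr₀ (hbound n hn) (hr hx))
end
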